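/- Let r > 0 and k ≥ 1 be a natural number. Let λ : ℕ → ℂ be a sequence of nonzero complex numbers with |λ_n| → ∞, let m : ℕ → ℕ, and let coefficients c_{n,η} ∈ ℂ be given for 0 ≤ η ≤ m_n; write M_n = max_{0≤η≤m_n} |c_{n,η}|. Assume that ∑_n M_n · B(r, λ_n, k, m_n) · (|λ_n| + 1)^k · e^{r·|Im λ_n|} < ∞. Let R > r and suppose there exists N > 0 such that sup over all n with |λ_n| > N of (|Im λ_n| + m_n)/ln(2 + |λ_n|) is strictly less than 1/(R − r). Then the series ∑_n ∑_{η=0}^{m_n} c_{n,η} · e^{λ_n,η} converges in C^{k−1}[−R, R]. -/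

import Mathlib

/-!
Each term `F_n = ∑_η c_{n,η} e^{λ_n,η}` is the restriction to `ℝ` of an entire function, so
Cauchy's estimate on the circle of radius `((1 + |λ_n|)(m_n + 1))⁻¹` around a point of `[-R, R]`
bounds `|F_n^{(j)}|` there by a constant times
`(m_n + 1) M_n max(1, R)^{m_n} e^{R |Im λ_n|} ((1 + |λ_n|)(m_n + 1))^j`.
As `max(1, R)^m ≤ B(r, λ, k, m) e^{(R - r) m}`, for `j < k` this is the `n`-th term of the
assumed convergent series times `(m_n + 1)^{j+1} e^{(R - r)(|Im λ_n| + m_n)} / (1 + |λ_n|)`.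
By the growth hypothesis, with `L = log (2 + |λ_n|)`, that factor is
`O(L^{j+1} e^{-(1 - (R - r)θ) L})`, which tends to `0`; the Weierstrass M-test concludes.
-/

open Complex Filter

/-- The weight `B(R, λ, q, m)` from the paper (it depends only on `R`, `q`, `m`). -/
noncomputable def Bwt (R : ℝ) (_lam : ℂ) (q m : ℕ) : ℝ :=
  if R > 1 then R ^ m
  else if R = 1 then (m : ℝ) + 1
  else min ((q : ℝ) + 1) ((m : ℝ) + 1)

/-- The exponential monomial `e^{λ,η}(t) = (it)^η e^{iλt}`. -/
noncomputable def eMon (lam : ℂ) (η : ℕ) : ℝ → ℂ :=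
  fun t => (Complex.I * t) ^ η * Complex.exp (Complex.I * lam * t)

/-- A series of functions `∑ₙ F n` converges in `C^k[-r, r]`: for every `j ≤ k`
the series of `j`-th derivatives converges absolutely and uniformly on `[-r, r]`. -/
def ConvergesInCk (k : ℕ) (r : ℝ) (F : ℕ → ℝ → ℂ) : Prop :=
  ∀ j ≤ k,
    (∀ t ∈ Set.Icc (-r) r, Summable fun n => ‖iteratedDeriv j (F n) t‖) ∧
    TendstoUniformlyOn
      (fun N t => ∑ n ∈ Finset.range N, iteratedDeriv j (F n) t)
      (fun t => ∑' n, iteratedDeriv j (F n) t) atTop (Set.Icc (-r) r)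

open Nat Topology

lemma ConvergesInCk.of_norm_iteratedDeriv_le {k : ℕ} {r : ℝ} {F : ℕ → ℝ → ℂ}
    (h : ∀ j ≤ k, ∃ u : ℕ → ℝ, Summable u ∧
      ∀ n, ∀ t ∈ Set.Icc (-r) r, ‖iteratedDeriv j (F n) t‖ ≤ u n) :
    ConvergesInCk k r F := by
  intro j hj
  obtain ⟨u, hu, hFu⟩ := h j hj
  exact ⟨fun t ht => hu.of_nonneg_of_le (fun _ => norm_nonneg _) (fun n => hFu n t ht),
    tendstoUniformlyOn_tsum_nat hu hFu⟩

lemma iteratedDeriv_comp_ofReal {f : ℂ → ℂ} (hf : Differentiable ℂ f) (j : ℕ) (t : ℝ) :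
    iteratedDeriv j (fun s : ℝ => f s) t = iteratedDeriv j f t := by
  induction j generalizing f with
  | zero => simp
  | succ j ih =>
    have hderiv : (deriv fun s : ℝ => f s) = fun s : ℝ => deriv f s :=
      funext fun s => (hf s).hasDerivAt.comp_ofReal.deriv
    rw [iteratedDeriv_succ', iteratedDeriv_succ', hderiv, ih hf.deriv]

/-- On real arguments this is definitionally `∑ η ∈ Finset.range (m + 1), c η * eMon lam η t`. -/
noncomputable def expPoly (c : ℕ → ℂ) (lam : ℂ) (m : ℕ) (z : ℂ) : ℂ :=
  ∑ η ∈ Finset.range (m + 1), c η * ((I * z) ^ η * exp (I * lam * z))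

lemma differentiable_expPoly (c : ℕ → ℂ) (lam : ℂ) (m : ℕ) :
    Differentiable ℂ (expPoly c lam m) := by
  unfold expPoly
  fun_prop

lemma norm_exp_I_mul_le (lam z : ℂ) (t : ℝ) :
    ‖exp (I * lam * z)‖ ≤ Real.exp (|lam.im| * |t| + ‖lam‖ * ‖z - t‖) := by
  rw [norm_exp, Real.exp_le_exp]
  have hsplit : I * lam * z = I * lam * t + I * lam * (z - t) := by ring
  have hreal : (I * lam * t).re = -(lam.im * t) := by simp
  have hnorm : ‖I * lam * (z - t)‖ = ‖lam‖ * ‖z - t‖ := by simp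
  rw [hsplit, add_re, hreal, ← abs_mul, ← hnorm]
  exact add_le_add (neg_le_abs _) (re_le_norm _)

lemma norm_expPoly_le {c : ℕ → ℂ} {m : ℕ} {M : ℝ} (hc : ∀ η ≤ m, ‖c η‖ ≤ M)
    (lam z : ℂ) (t : ℝ) :
    ‖expPoly c lam m z‖ ≤
      (m + 1) * M * max 1 ‖z‖ ^ m * Real.exp (|lam.im| * |t| + ‖lam‖ * ‖z - t‖) := by
  have hterm : ∀ η ∈ Finset.range (m + 1), ‖c η * ((I * z) ^ η * exp (I * lam * z))‖ ≤
      M * max 1 ‖z‖ ^ m * Real.exp (|lam.im| * |t| + ‖lam‖ * ‖z - t‖) := by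
    intro η hη
    have hηm : η ≤ m := Nat.lt_succ_iff.mp (Finset.mem_range.mp hη)
    have hpow : ‖z‖ ^ η ≤ max 1 ‖z‖ ^ m :=
      (pow_le_pow_left₀ (norm_nonneg z) (le_max_right 1 _) η).trans
        (pow_le_pow_right₀ (le_max_left 1 _) hηm)
    rw [norm_mul, norm_mul, norm_pow, norm_mul, norm_I, one_mul, ← mul_assoc]
    have hM : 0 ≤ M := (norm_nonneg _).trans (hc η hηm)
    gcongr
    exacts [hc η hηm, norm_exp_I_mul_le lam z t]
  calc ‖expPoly c lam m z‖
      ≤ ∑ η ∈ Finset.range (m + 1), ‖c η * ((I * z) ^ η * exp (I * lam * z))‖ :=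
        norm_sum_le _ _
    _ ≤ ∑ _η ∈ Finset.range (m + 1),
          M * max 1 ‖z‖ ^ m * Real.exp (|lam.im| * |t| + ‖lam‖ * ‖z - t‖) :=
        Finset.sum_le_sum hterm
    _ = _ := by simp [mul_assoc]

lemma norm_iteratedDeriv_expPoly_le {c : ℕ → ℂ} {m : ℕ} {M : ℝ} (hc : ∀ η ≤ m, ‖c η‖ ≤ M)
    (lam : ℂ) (j : ℕ) {R t : ℝ} (ht : |t| ≤ R) :
    ‖iteratedDeriv j (fun s : ℝ => expPoly c lam m s) t‖ ≤
      j ! * ((m + 1) * M * max 1 R ^ m * Real.exp (R * |lam.im| + 2) *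
        ((1 + ‖lam‖) * (m + 1)) ^ j) := by
  have hM : 0 ≤ M := (norm_nonneg _).trans (hc 0 (Nat.zero_le m))
  set X : ℝ := (1 + ‖lam‖) * (m + 1)
  have hX : 0 < X := by positivity
  have hsphere : ∀ z ∈ Metric.sphere (t : ℂ) X⁻¹,
      ‖expPoly c lam m z‖ ≤ (m + 1) * M * max 1 R ^ m * Real.exp (R * |lam.im| + 2) := by
    intro z hz
    rw [mem_sphere_iff_norm] at hz
    have hρm : X⁻¹ * m ≤ 1 := by
      rw [inv_mul_le_one₀ hX]
      nlinarith [norm_nonneg lam]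
    have hρlam : ‖lam‖ * X⁻¹ ≤ 1 := by
      rw [← div_eq_mul_inv, div_le_one hX]
      nlinarith [norm_nonneg lam]
    have hz_le : ‖z‖ ≤ |t| + X⁻¹ := by
      simpa [hz] using norm_le_norm_add_norm_sub' z (t : ℂ)
    have hmax : max 1 ‖z‖ ^ m ≤ max 1 R ^ m * Real.exp 1 :=
      calc max 1 ‖z‖ ^ m ≤ (max 1 R * (1 + X⁻¹)) ^ m := by
            gcongr
            refine max_le (one_le_mul_of_one_le_of_one_le (le_max_left _ _) ?_) ?_
            · linarith [inv_pos.mpr hX]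
            · nlinarith [le_max_left 1 R, le_max_right 1 R, inv_pos.mpr hX]
        _ ≤ (max 1 R * Real.exp X⁻¹) ^ m := by
            gcongr
            linarith [Real.add_one_le_exp X⁻¹]
        _ = max 1 R ^ m * Real.exp (X⁻¹ * m) := by
            rw [mul_pow, ← Real.exp_nat_mul, mul_comm (m : ℝ)]
        _ ≤ max 1 R ^ m * Real.exp 1 := by gcongr
    have hexp : |lam.im| * |t| + ‖lam‖ * ‖z - t‖ ≤ R * |lam.im| + 1 := by
      rw [hz]
      nlinarith [abs_nonneg lam.im]
    calc ‖expPoly c lam m z‖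
        ≤ (m + 1) * M * max 1 ‖z‖ ^ m * Real.exp (|lam.im| * |t| + ‖lam‖ * ‖z - t‖) :=
          norm_expPoly_le hc lam z t
      _ ≤ (m + 1) * M * (max 1 R ^ m * Real.exp 1) * Real.exp (R * |lam.im| + 1) := by
          gcongr
      _ = (m + 1) * M * max 1 R ^ m * Real.exp (R * |lam.im| + 2) := by
          have hsplit : Real.exp (R * |lam.im| + 2) = Real.exp 1 * Real.exp (R * |lam.im| + 1) := by
            rw [← Real.exp_add]
            ring_nf
          rw [hsplit]
          ring
  rw [iteratedDeriv_comp_ofReal (differentiable_expPoly c lam m)]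
  calc _ ≤ j ! * ((m + 1) * M * max 1 R ^ m * Real.exp (R * |lam.im| + 2)) / X⁻¹ ^ j :=
        norm_iteratedDeriv_le_of_forall_mem_sphere_norm_le j (inv_pos.mpr hX)
          (differentiable_expPoly c lam m).diffContOnCl hsphere
    _ = _ := by rw [inv_pow, div_inv_eq_mul, mul_assoc]

lemma one_le_Bwt (R : ℝ) (lam : ℂ) (q m : ℕ) : 1 ≤ Bwt R lam q m := by
  unfold Bwt
  split_ifs with h1
  · exact one_le_pow₀ h1.le
  · simp
  · simp

lemma max_one_le_max_one_mul_exp_sub {r R : ℝ} (hrR : r ≤ R) :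
    max 1 R ≤ max 1 r * Real.exp (R - r) := by
  set a := max 1 r
  have ha : 1 ≤ a := le_max_left _ _
  have hexp : Real.exp (R - a) ≤ Real.exp (R - r) := by
    gcongr
    exact le_max_right _ _
  rcases le_or_gt R a with hRa | haR
  · calc max 1 R ≤ a := max_le ha hRa
      _ ≤ a * Real.exp (R - r) :=
        le_mul_of_one_le_right (by positivity) (Real.one_le_exp (by linarith))
  · calc max 1 R = R := max_eq_right (ha.trans haR.le)
      _ ≤ a * (R - a + 1) := by nlinarith
      _ ≤ a * Real.exp (R - a) := by gcongr; exact Real.add_one_le_exp _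
      _ ≤ a * Real.exp (R - r) := by gcongr

lemma max_one_pow_le_Bwt_mul_exp {r R : ℝ} (hrR : r ≤ R) (lam : ℂ) (q m : ℕ) :
    max 1 R ^ m ≤ Bwt r lam q m * Real.exp ((R - r) * m) := by
  have hBwt : max 1 r ^ m ≤ Bwt r lam q m := by
    rcases lt_or_ge 1 r with h | h
    · rw [max_eq_right h.le, Bwt, if_pos h]
    · rw [max_eq_left h, one_pow]
      exact one_le_Bwt r lam q m
  calc max 1 R ^ m ≤ (max 1 r * Real.exp (R - r)) ^ m := by
        gcongr
        exact max_one_le_max_one_mul_exp_sub hrR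
    _ = max 1 r ^ m * Real.exp ((R - r) * m) := by
        rw [mul_pow, ← Real.exp_nat_mul, mul_comm (m : ℝ)]
    _ ≤ Bwt r lam q m * Real.exp ((R - r) * m) := by gcongr

lemma expPoly_bound_le {r R M : ℝ} {j k : ℕ} (hrR : r ≤ R) (hM : 0 ≤ M) (hjk : j < k)
    (lam : ℂ) (m : ℕ) :
    (m + 1) * M * max 1 R ^ m * Real.exp (R * |lam.im| + 2) * ((1 + ‖lam‖) * (m + 1)) ^ j ≤
      Real.exp 2 * (M * Bwt r lam k m * (‖lam‖ + 1) ^ k * Real.exp (r * |lam.im|)) *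
        ((m + 1) ^ (j + 1) * Real.exp ((R - r) * (|lam.im| + m)) / (1 + ‖lam‖)) := by
  have hA : 0 < 1 + ‖lam‖ := by positivity
  have hpow : (1 + ‖lam‖) ^ j ≤ (1 + ‖lam‖) ^ k / (1 + ‖lam‖) := by
    rw [le_div_iff₀ hA, ← pow_succ]
    exact pow_le_pow_right₀ (by linarith [norm_nonneg lam]) hjk
  have hexp : Real.exp (R * |lam.im| + 2) * Real.exp ((R - r) * m) =
      Real.exp 2 * Real.exp (r * |lam.im|) * Real.exp ((R - r) * (|lam.im| + m)) := by
    simp only [← Real.exp_add]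
    ring_nf
  have hBwt : 0 ≤ Bwt r lam k m := zero_le_one.trans (one_le_Bwt r lam k m)
  calc _ = M * (m + 1) ^ (j + 1) * Real.exp (R * |lam.im| + 2) *
        (max 1 R ^ m * (1 + ‖lam‖) ^ j) := by rw [mul_pow]; ring
    _ ≤ M * (m + 1) ^ (j + 1) * Real.exp (R * |lam.im| + 2) *
        (Bwt r lam k m * Real.exp ((R - r) * m) * ((1 + ‖lam‖) ^ k / (1 + ‖lam‖))) := by
        gcongr
        exact max_one_pow_le_Bwt_mul_exp hrR lam k m
    _ = _ := by
        linear_combination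
          (M * (m + 1) ^ (j + 1) * Bwt r lam k m * (1 + ‖lam‖) ^ k / (1 + ‖lam‖)) * hexp

lemma tendsto_growth_weight_nhds_zero {lam : ℕ → ℂ} {m : ℕ → ℕ} {r R θ : ℝ} (j : ℕ)
    (hrR : r ≤ R) (hθ : (R - r) * θ < 1) (hlam : Tendsto (fun n => ‖lam n‖) atTop atTop)
    (hgrow : ∀ᶠ n in atTop, |(lam n).im| + m n ≤ θ * Real.log (2 + ‖lam n‖)) :
    Tendsto (fun n => ((m n : ℝ) + 1) ^ (j + 1) * Real.exp ((R - r) * (|(lam n).im| + m n)) /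
      (1 + ‖lam n‖)) atTop (𝓝 0) := by
  set b := 1 - (R - r) * θ
  have hb : 0 < b := by simp only [b]; linarith
  set L : ℕ → ℝ := fun n => Real.log (2 + ‖lam n‖)
  have hL : Tendsto L atTop atTop :=
    Real.tendsto_log_atTop.comp (tendsto_atTop_add_const_left _ 2 hlam)
  have hlim : Tendsto (fun n => 2 * (|θ| + 1) ^ (j + 1) * (L n ^ (j + 1) * Real.exp (-b * L n)))
      atTop (𝓝 0) := by
    have := ((tendsto_rpow_mul_exp_neg_mul_atTop_nhds_zero ((j + 1 : ℕ) : ℝ) b hb).comp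
      hL).const_mul (2 * (|θ| + 1) ^ (j + 1))
    simpa only [Function.comp_def, Real.rpow_natCast, mul_zero] using this
  refine squeeze_zero' (Eventually.of_forall fun n => by positivity) ?_ hlim
  filter_upwards [hgrow, hL.eventually_ge_atTop 1] with n hn hL1
  have hA : 0 < 2 + ‖lam n‖ := by positivity
  have hm : (m n : ℝ) + 1 ≤ (|θ| + 1) * L n := by
    nlinarith [abs_nonneg (lam n).im, le_abs_self θ, abs_nonneg θ]
  have hinv : (1 + ‖lam n‖)⁻¹ ≤ 2 * Real.exp (-L n) := by
    rw [Real.exp_neg, Real.exp_log hA, ← div_eq_mul_inv, inv_eq_one_div,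
      div_le_div_iff₀ (by positivity) hA]
    linarith [norm_nonneg (lam n)]
  have hexp : Real.exp ((R - r) * (θ * L n)) * Real.exp (-L n) = Real.exp (-b * L n) := by
    rw [← Real.exp_add]
    congr 1
    ring
  calc _ = ((m n : ℝ) + 1) ^ (j + 1) * Real.exp ((R - r) * (|(lam n).im| + m n)) *
        (1 + ‖lam n‖)⁻¹ := div_eq_mul_inv _ _
    _ ≤ ((|θ| + 1) * L n) ^ (j + 1) * Real.exp ((R - r) * (θ * L n)) * (2 * Real.exp (-L n)) := by
        gcongr
    _ = _ := by
        rw [mul_pow, ← hexp]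
        ring

lemma summable_expPoly_bound {lam : ℕ → ℂ} {m : ℕ → ℕ} {M : ℕ → ℝ} {r R θ : ℝ} {j k : ℕ}
    (hsum : Summable fun n =>
      M n * Bwt r (lam n) k (m n) * (‖lam n‖ + 1) ^ k * Real.exp (r * |(lam n).im|))
    (hM : ∀ n, 0 ≤ M n) (hjk : j < k) (hrR : r ≤ R) (hθ : (R - r) * θ < 1)
    (hlam : Tendsto (fun n => ‖lam n‖) atTop atTop)
    (hgrow : ∀ᶠ n in atTop, |(lam n).im| + m n ≤ θ * Real.log (2 + ‖lam n‖)) :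
    Summable fun n => ((m n : ℝ) + 1) * M n * max 1 R ^ m n *
      Real.exp (R * |(lam n).im| + 2) * ((1 + ‖lam n‖) * (m n + 1)) ^ j := by
  refine (hsum.mul_left (Real.exp 2)).of_norm_bounded_eventually_nat ?_
  filter_upwards [(tendsto_growth_weight_nhds_zero j hrR hθ hlam hgrow).eventually_le_const
    zero_lt_one] with n hn
  have ha : 0 ≤ M n * Bwt r (lam n) k (m n) * (‖lam n‖ + 1) ^ k * Real.exp (r * |(lam n).im|) :=
    mul_nonneg (mul_nonneg (mul_nonneg (hM n) (zero_le_one.trans (one_le_Bwt _ _ _ _)))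
      (by positivity)) (by positivity)
  rw [Real.norm_of_nonneg (by have := hM n; positivity)]
  calc _ ≤ _ := expPoly_bound_le hrR (hM n) hjk (lam n) (m n)
    _ ≤ _ := mul_le_of_le_one_right (mul_nonneg (Real.exp_pos 2).le ha) hn

theorem lemma21 (r : ℝ) (k : ℕ) (hk : 1 ≤ k)
    (lam : ℕ → ℂ)
    (hlam : Tendsto (fun n => ‖lam n‖) atTop atTop)
    (m : ℕ → ℕ) (c : ℕ → ℕ → ℂ)
    (M : ℕ → ℝ)
    (hM : ∀ n, M n = (Finset.range (m n + 1)).sup' (by simp) fun η => ‖c n η‖)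
    (hsum : Summable fun n =>
      M n * Bwt r (lam n) k (m n) * (‖lam n‖ + 1) ^ k *
        Real.exp (r * |(lam n).im|))
    (R : ℝ) (hR : r < R)
    (hgrow : ∃ N > (0 : ℝ), ∃ θ : ℝ, θ < 1 / (R - r) ∧
      ∀ n, ‖lam n‖ > N →
        (|(lam n).im| + (m n : ℝ)) / Real.log (2 + ‖lam n‖) ≤ θ) :
    ConvergesInCk (k - 1) R
      (fun n t => ∑ η ∈ Finset.range (m n + 1), c n η * eMon (lam n) η t) := by
  obtain ⟨N, -, θ, hθ, hNθ⟩ := hgrow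
  have hθ' : (R - r) * θ < 1 := by
    rwa [lt_div_iff₀ (sub_pos.mpr hR), mul_comm] at hθ
  have hgrow' : ∀ᶠ n in atTop, |(lam n).im| + m n ≤ θ * Real.log (2 + ‖lam n‖) := by
    filter_upwards [hlam.eventually_gt_atTop N] with n hn
    exact (div_le_iff₀ (Real.log_pos (by linarith [norm_nonneg (lam n)]))).mp (hNθ n hn)
  have hc : ∀ n, ∀ η ≤ m n, ‖c n η‖ ≤ M n := fun n η hη =>
    hM n ▸ Finset.le_sup' (fun η => ‖c n η‖) (Finset.mem_range_succ_iff.mpr hη)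
  have hM0 : ∀ n, 0 ≤ M n := fun n => (norm_nonneg _).trans (hc n 0 (Nat.zero_le _))
  refine ConvergesInCk.of_norm_iteratedDeriv_le fun j hj => ⟨_, ?_, fun n t ht =>
    norm_iteratedDeriv_expPoly_le (hc n) (lam n) j (abs_le.mpr ht)⟩
  exact (summable_expPoly_bound (j := j) hsum hM0 (by omega) hR.le hθ' hlam hgrow').mul_left
    (j ! : ℝ)
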